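/- In the Heisenberg group H_3(ℝ) with the subFinsler metric d_3 induced by the ℓ¹ norm on the horizontal plane, if |xy|/2 ≤ |z| ≤ max{|x|,|y|}² − |xy|/2, then d_3(id,(x,y,z)) = max{|x|,|y|} + 2|z|/max{|x|,|y|}. -/

import Mathlib

/-- The subFinsler (Carnot–Carathéodory) distance from the identity in the
Heisenberg group `H₃(ℝ)`, in exponential coordinates `(x,y,z)` with `[X,Y] = Z`,
associated to the ℓ¹ norm `|a| + |b|` on horizontal vectors `aX + bY`.
A horizontal path is encoded by coordinate functions `x y z : ℝ → ℝ` with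
controls `u v` (the horizontal velocities), the constraint on `z` being
`z' = (x v - y u)/2`, and its length is `∫ (|u| + |v|)`. -/
noncomputable def d3 : ℝ × ℝ × ℝ → ℝ := fun p =>
  sInf { L : ℝ | ∃ x y z u v : ℝ → ℝ,
    x 0 = 0 ∧ y 0 = 0 ∧ z 0 = 0 ∧
    x 1 = p.1 ∧ y 1 = p.2.1 ∧ z 1 = p.2.2 ∧
    ContinuousOn u (Set.Icc 0 1) ∧ ContinuousOn v (Set.Icc 0 1) ∧
    (∀ t ∈ Set.Icc (0:ℝ) 1, HasDerivAt x (u t) t ∧ HasDerivAt y (v t) t ∧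
        HasDerivAt z ((x t * v t - y t * u t) / 2) t) ∧
    L = ∫ t in (0:ℝ)..1, (|u t| + |v t|) }

/-- Group law of `H₃(ℝ)` in exponential coordinates:
`(x,y,z)·(x',y',z') = (x+x', y+y', z+z'+(xy'-yx')/2)`. -/
noncomputable def hMul (p q : ℝ × ℝ × ℝ) : ℝ × ℝ × ℝ :=
  (p.1 + q.1, p.2.1 + q.2.1, p.2.2 + q.2.2 + (p.1 * q.2.1 - p.2.1 * q.1) / 2)

/-- Inverse in `H₃(ℝ)` in exponential coordinates. -/
noncomputable def hInv (p : ℝ × ℝ × ℝ) : ℝ × ℝ × ℝ := (-p.1, -p.2.1, -p.2.2)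

/-- The left-invariant subFinsler distance `d₃` on `H₃(ℝ)`. -/
noncomputable def d3dist (p q : ℝ × ℝ × ℝ) : ℝ := d3 (hMul (hInv p) q)

/-!
Lower bound: along a horizontal path from the identity to `(x, y, z)` the planar projection
stays in a box `[cx - rx, cx + rx] × [cy - ry, cy + ry]` containing `0` and `(x, y)`.
A coordinate whose range has length `2 r` travels at least `4 r` minus its net displacement,
so `∫ |u| ≥ 4 rx - |x|` and `∫ |v| ≥ 4 ry - |y|`, while
`2 z - cx y + cy x = ∫ (X - cx) dY - (Y - cy) dX ≤ rx ∫ |v| + ry ∫ |u|`.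
Eliminating the box from these three inequalities, using `|z| ≤ max ^ 2 - |x y| / 2`, gives
`max + 2 |z| / max ≤ ∫ (|u| + |v|)`, where `max = max |x| |y|`.

Upper bound: move in `Y` by `y/2 - z/x`, then in `X` by `x`, then in `Y` by `y/2 + z/x`.
When `|x y| / 2 ≤ |z|` this path has length `|x| + 2 |z| / |x|`.

The swap `(x, y, z) ↦ (y, x, -z)` and the reflections `(x, y, z) ↦ (-x, y, -z)`,
`(x, y, z) ↦ (x, -y, -z)` preserve path lengths; they reduce the upper bound to `|y| ≤ |x|`
and the lower bound to `|y| ≤ x`, `0 ≤ z`.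
-/

open Set Real intervalIntegral

def IsHorizontal (X Y Z u v : ℝ → ℝ) : Prop :=
  ContinuousOn u (Icc 0 1) ∧ ContinuousOn v (Icc 0 1) ∧
    ∀ t ∈ Icc (0 : ℝ) 1, HasDerivAt X (u t) t ∧ HasDerivAt Y (v t) t ∧
      HasDerivAt Z ((X t * v t - Y t * u t) / 2) t

def horizontalLengths (p : ℝ × ℝ × ℝ) : Set ℝ :=
  {L | ∃ X Y Z u v : ℝ → ℝ, X 0 = 0 ∧ Y 0 = 0 ∧ Z 0 = 0 ∧
    X 1 = p.1 ∧ Y 1 = p.2.1 ∧ Z 1 = p.2.2 ∧ IsHorizontal X Y Z u v ∧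
    L = ∫ t in (0 : ℝ)..1, (|u t| + |v t|)}

theorem d3_eq_sInf_horizontalLengths (p : ℝ × ℝ × ℝ) :
    d3 p = sInf (horizontalLengths p) := by
  simp only [d3, horizontalLengths, IsHorizontal, and_assoc]

theorem nonneg_of_mem_horizontalLengths {p : ℝ × ℝ × ℝ} {L : ℝ}
    (hL : L ∈ horizontalLengths p) : 0 ≤ L := by
  obtain ⟨X, Y, Z, u, v, -, -, -, -, -, -, -, rfl⟩ := hL
  exact integral_nonneg zero_le_one fun t _ => by positivity

namespace IsHorizontal

variable {X Y Z u v : ℝ → ℝ}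

theorem continuousOn_fst (h : IsHorizontal X Y Z u v) : ContinuousOn X (Icc 0 1) :=
  fun t ht => (h.2.2 t ht).1.continuousAt.continuousWithinAt

theorem continuousOn_snd (h : IsHorizontal X Y Z u v) : ContinuousOn Y (Icc 0 1) :=
  fun t ht => (h.2.2 t ht).2.1.continuousAt.continuousWithinAt

theorem swap (h : IsHorizontal X Y Z u v) : IsHorizontal Y X (fun t => -Z t) v u := by
  refine ⟨h.2.1, h.1, fun t ht => ?_⟩
  obtain ⟨hX, hY, hZ⟩ := h.2.2 t ht
  exact ⟨hY, hX, hZ.neg.congr_deriv (by ring)⟩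

theorem neg_fst (h : IsHorizontal X Y Z u v) :
    IsHorizontal (fun t => -X t) Y (fun t => -Z t) (fun t => -u t) v := by
  refine ⟨h.1.neg, h.2.1, fun t ht => ?_⟩
  obtain ⟨hX, hY, hZ⟩ := h.2.2 t ht
  exact ⟨hX.neg, hY, hZ.neg.congr_deriv (by ring)⟩

end IsHorizontal

theorem mem_horizontalLengths_swap {x y z L : ℝ} (hL : L ∈ horizontalLengths (x, y, z)) :
    L ∈ horizontalLengths (y, x, -z) := by
  obtain ⟨X, Y, Z, u, v, hX0, hY0, hZ0, hX1, hY1, hZ1, hγ, rfl⟩ := hL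
  refine ⟨Y, X, fun t => -Z t, v, u, hY0, hX0, by simp [hZ0], hY1, hX1, by simp [hZ1],
    hγ.swap, integral_congr fun t _ => add_comm _ _⟩

theorem mem_horizontalLengths_neg_fst {x y z L : ℝ} (hL : L ∈ horizontalLengths (x, y, z)) :
    L ∈ horizontalLengths (-x, y, -z) := by
  obtain ⟨X, Y, Z, u, v, hX0, hY0, hZ0, hX1, hY1, hZ1, hγ, rfl⟩ := hL
  refine ⟨fun t => -X t, Y, fun t => -Z t, fun t => -u t, v, by simp [hX0], hY0, by simp [hZ0],
    by simp [hX1], hY1, by simp [hZ1], hγ.neg_fst, integral_congr fun t _ => by simp⟩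

theorem mem_horizontalLengths_neg_snd {x y z L : ℝ} (hL : L ∈ horizontalLengths (x, y, z)) :
    L ∈ horizontalLengths (x, -y, -z) := by
  simpa using
    mem_horizontalLengths_swap (mem_horizontalLengths_neg_fst (mem_horizontalLengths_swap hL))

namespace Real.smoothTransition

theorem hasDerivAt_deriv (s : ℝ) : HasDerivAt smoothTransition (deriv smoothTransition s) s :=
  (smoothTransition.contDiff (n := 1).differentiable one_ne_zero s).hasDerivAt

theorem continuous_deriv : Continuous (deriv smoothTransition) :=
  smoothTransition.contDiff (n := 1).continuous_deriv le_rfl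

theorem deriv_nonneg (s : ℝ) : 0 ≤ deriv smoothTransition s :=
  smoothTransition.monotone.deriv_nonneg

theorem deriv_eq_zero_of_nonpos {s : ℝ} (hs : s ≤ 0) : deriv smoothTransition s = 0 :=
  IsLocalMin.deriv_eq_zero <| Filter.Eventually.of_forall fun r => by
    rw [zero_of_nonpos hs]; exact nonneg r

theorem deriv_eq_zero_of_one_le {s : ℝ} (hs : 1 ≤ s) : deriv smoothTransition s = 0 :=
  IsLocalMax.deriv_eq_zero <| Filter.Eventually.of_forall fun r => by
    rw [one_of_one_le hs]; exact le_one r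

theorem mem_Ioo_of_deriv_ne_zero {s : ℝ} (hs : deriv smoothTransition s ≠ 0) : s ∈ Ioo 0 1 :=
  ⟨not_le.1 fun h => hs (deriv_eq_zero_of_nonpos h),
    not_le.1 fun h => hs (deriv_eq_zero_of_one_le h)⟩

end Real.smoothTransition

/-- `ramp k` rises from `0` to `1` during the time slot `[k/3, (k+1)/3]`, with continuous
derivative `rampDeriv k`; a path made of three straight segments traversed along `ramp 0`,
`ramp 1`, `ramp 2` thus has continuous controls. -/
noncomputable def ramp (k t : ℝ) : ℝ := smoothTransition (3 * t - k)

noncomputable def rampDeriv (k t : ℝ) : ℝ := 3 * deriv smoothTransition (3 * t - k)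

theorem hasDerivAt_ramp (k t : ℝ) : HasDerivAt (ramp k) (rampDeriv k t) t := by
  have := (smoothTransition.hasDerivAt_deriv (3 * t - k)).comp t
    (((hasDerivAt_id' t).const_mul 3).sub_const k)
  rwa [mul_one, mul_comm] at this

theorem continuous_rampDeriv (k : ℝ) : Continuous (rampDeriv k) := by
  have := smoothTransition.continuous_deriv
  unfold rampDeriv; fun_prop

theorem rampDeriv_nonneg (k t : ℝ) : 0 ≤ rampDeriv k t :=
  mul_nonneg zero_le_three (smoothTransition.deriv_nonneg _)

theorem ramp_zero {k : ℝ} (hk : 0 ≤ k) : ramp k 0 = 0 :=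
  smoothTransition.zero_of_nonpos (by linarith)

theorem ramp_one {k : ℝ} (hk : k ≤ 2) : ramp k 1 = 1 :=
  smoothTransition.one_of_one_le (by linarith)

theorem integral_rampDeriv {k : ℝ} (hk₀ : 0 ≤ k) (hk₂ : k ≤ 2) :
    ∫ t in (0 : ℝ)..1, rampDeriv k t = 1 := by
  rw [integral_eq_sub_of_hasDerivAt (fun t _ => hasDerivAt_ramp k t)
    ((continuous_rampDeriv k).intervalIntegrable 0 1), ramp_one hk₂, ramp_zero hk₀, sub_zero]

theorem ramp_mul_rampDeriv_eq_zero {j k : ℝ} (h : k + 1 ≤ j) (t : ℝ) :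
    ramp j t * rampDeriv k t = 0 := by
  by_cases hk : deriv smoothTransition (3 * t - k) = 0
  · rw [rampDeriv, hk, mul_zero, mul_zero]
  · rw [ramp, smoothTransition.zero_of_nonpos
      (by linarith [(smoothTransition.mem_Ioo_of_deriv_ne_zero hk).2]), zero_mul]

theorem ramp_mul_rampDeriv_eq_self {j k : ℝ} (h : j + 1 ≤ k) (t : ℝ) :
    ramp j t * rampDeriv k t = rampDeriv k t := by
  by_cases hk : deriv smoothTransition (3 * t - k) = 0
  · rw [rampDeriv, hk, mul_zero, mul_zero]
  · rw [ramp, smoothTransition.one_of_one_le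
      (by linarith [(smoothTransition.mem_Ioo_of_deriv_ne_zero hk).1]), one_mul]

theorem isHorizontal_threeSegments (p h₁ h₂ : ℝ) :
    IsHorizontal (fun t => p * ramp 1 t) (fun t => h₁ * ramp 0 t + h₂ * ramp 2 t)
      (fun t => p * (h₂ * ramp 2 t - h₁ * ramp 1 t) / 2) (fun t => p * rampDeriv 1 t)
      (fun t => h₁ * rampDeriv 0 t + h₂ * rampDeriv 2 t) := by
  have := continuous_rampDeriv 0; have := continuous_rampDeriv 1; have := continuous_rampDeriv 2
  refine ⟨by fun_prop, by fun_prop, fun t _ => ⟨(hasDerivAt_ramp 1 t).const_mul p,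
    ((hasDerivAt_ramp 0 t).const_mul h₁).add ((hasDerivAt_ramp 2 t).const_mul h₂), ?_⟩⟩
  refine (((((hasDerivAt_ramp 2 t).const_mul h₂).sub
    ((hasDerivAt_ramp 1 t).const_mul h₁)).const_mul p).div_const 2).congr_deriv ?_
  have e₁ := ramp_mul_rampDeriv_eq_zero (j := 1) (k := 0) (by norm_num) t
  have e₂ := ramp_mul_rampDeriv_eq_self (j := 1) (k := 2) (by norm_num) t
  have e₃ := ramp_mul_rampDeriv_eq_self (j := 0) (k := 1) (by norm_num) t
  have e₄ := ramp_mul_rampDeriv_eq_zero (j := 2) (k := 1) (by norm_num) t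
  linear_combination (p / 2) * (-h₁ * e₁ - h₂ * e₂ + h₁ * e₃ + h₂ * e₄)

theorem integral_threeSegments_le (p h₁ h₂ : ℝ) :
    ∫ t in (0 : ℝ)..1, (|p * rampDeriv 1 t| + |h₁ * rampDeriv 0 t + h₂ * rampDeriv 2 t|) ≤
      |p| + |h₁| + |h₂| := by
  have hint (k c : ℝ) :
      IntervalIntegrable (fun t => c * rampDeriv k t) MeasureTheory.volume 0 1 :=
    ((continuous_rampDeriv k).intervalIntegrable 0 1).const_mul c
  have := continuous_rampDeriv 0; have := continuous_rampDeriv 1; have := continuous_rampDeriv 2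
  calc ∫ t in (0 : ℝ)..1, (|p * rampDeriv 1 t| + |h₁ * rampDeriv 0 t + h₂ * rampDeriv 2 t|)
      ≤ ∫ t in (0 : ℝ)..1,
          (|p| * rampDeriv 1 t + (|h₁| * rampDeriv 0 t + |h₂| * rampDeriv 2 t)) := by
        refine integral_mono_on zero_le_one (Continuous.intervalIntegrable (by fun_prop) _ _)
          ((hint 1 _).add ((hint 0 _).add (hint 2 _))) fun t _ => ?_
        rw [abs_mul, abs_of_nonneg (rampDeriv_nonneg 1 t)]
        gcongr
        refine (abs_add_le _ _).trans_eq ?_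
        rw [abs_mul, abs_mul, abs_of_nonneg (rampDeriv_nonneg 0 t),
          abs_of_nonneg (rampDeriv_nonneg 2 t)]
    _ = |p| + |h₁| + |h₂| := by
        rw [integral_add (hint 1 _) ((hint 0 _).add (hint 2 _)),
          integral_add (hint 0 _) (hint 2 _), integral_const_mul, integral_const_mul,
          integral_const_mul, integral_rampDeriv zero_le_one one_le_two,
          integral_rampDeriv le_rfl zero_le_two, integral_rampDeriv zero_le_two le_rfl]
        ring

theorem exists_mem_horizontalLengths_le_of_threeSegments (p h₁ h₂ : ℝ) :
    ∃ L ∈ horizontalLengths (p, h₁ + h₂, p * (h₂ - h₁) / 2), L ≤ |p| + |h₁| + |h₂| :=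
  ⟨_, ⟨_, _, _, _, _, by simp [ramp_zero], by simp [ramp_zero], by simp [ramp_zero],
    by simp [ramp_one], by simp [ramp_one], by simp [ramp_one],
    isHorizontal_threeSegments p h₁ h₂, rfl⟩, integral_threeSegments_le p h₁ h₂⟩

theorem abs_sub_add_abs_add_of_abs_le {α : Type*} [CommRing α] [LinearOrder α]
    [IsStrictOrderedRing α] {a b : α} (h : |a| ≤ |b|) : |a - b| + |a + b| = 2 * |b| := by
  rcases le_total 0 b with hb | hb
  · rw [abs_of_nonneg hb] at h ⊢
    rw [abs_of_nonpos (by linarith [le_abs_self a]), abs_of_nonneg (by linarith [neg_abs_le a])]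
    ring
  · rw [abs_of_nonpos hb] at h ⊢
    rw [abs_of_nonneg (by linarith [neg_abs_le a]), abs_of_nonpos (by linarith [le_abs_self a])]
    ring

theorem exists_mem_horizontalLengths_le {x y z : ℝ} (h1 : |x * y| / 2 ≤ |z|)
    (h2 : |z| ≤ max |x| |y| ^ 2 - |x * y| / 2) :
    ∃ L ∈ horizontalLengths (x, y, z), L ≤ max |x| |y| + 2 * |z| / max |x| |y| := by
  wlog hyx : |y| ≤ |x| generalizing x y z
  · obtain ⟨L, hL, hLle⟩ := this (x := y) (y := x) (z := -z) (by simpa [mul_comm] using h1)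
      (by simpa [max_comm, mul_comm] using h2) (le_of_not_ge hyx)
    exact ⟨L, by simpa using mem_horizontalLengths_swap hL, by simpa [max_comm] using hLle⟩
  rw [max_eq_left hyx] at h2 ⊢
  rcases eq_or_ne x 0 with rfl | hx
  · obtain rfl : y = 0 := abs_nonpos_iff.1 (by simpa using hyx)
    obtain rfl : z = 0 := abs_nonpos_iff.1 (by simpa using h2)
    simpa using exists_mem_horizontalLengths_le_of_threeSegments 0 0 0
  obtain ⟨L, hL, hLle⟩ := exists_mem_horizontalLengths_le_of_threeSegments x (y / 2 - z / x)
    (y / 2 + z / x)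
  have hend : (x, y / 2 - z / x + (y / 2 + z / x), x * (y / 2 + z / x - (y / 2 - z / x)) / 2) =
      (x, y, z) := by
    refine Prod.ext rfl (Prod.ext (by dsimp only; ring) (by dsimp only; field_simp; ring))
  refine ⟨L, hend ▸ hL, hLle.trans_eq ?_⟩
  have hyz : |y / 2| ≤ |z / x| := by
    rw [abs_div, abs_div, abs_two, le_div_iff₀ (abs_pos.2 hx)]
    linarith [abs_mul x y]
  rw [add_assoc, abs_sub_add_abs_add_of_abs_le hyz, abs_div, mul_div_assoc]

section Variation

variable {f f' : ℝ → ℝ} {a b : ℝ}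

theorem abs_sub_le_integral_abs_of_hasDerivAt (hab : a ≤ b)
    (hf : ∀ t ∈ Icc a b, HasDerivAt f (f' t) t) (hf' : ContinuousOn f' (Icc a b)) :
    |f b - f a| ≤ ∫ t in a..b, |f' t| := by
  rw [← integral_eq_sub_of_hasDerivAt (fun t ht => hf t (uIcc_of_le hab ▸ ht))
    (hf'.intervalIntegrable_of_Icc hab)]
  exact abs_integral_le_integral_abs hab

theorem abs_sub_add_abs_sub_add_abs_sub_le_integral_abs {s t : ℝ} (has : a ≤ s) (hst : s ≤ t)
    (htb : t ≤ b) (hf : ∀ r ∈ Icc a b, HasDerivAt f (f' r) r) (hf' : ContinuousOn f' (Icc a b)) :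
    |f s - f a| + |f t - f s| + |f b - f t| ≤ ∫ r in a..b, |f' r| := by
  have piece {c d : ℝ} (hac : a ≤ c) (hcd : c ≤ d) (hdb : d ≤ b) :
      |f d - f c| ≤ ∫ r in c..d, |f' r| :=
    abs_sub_le_integral_abs_of_hasDerivAt hcd (fun r hr => hf r ⟨hac.trans hr.1, hr.2.trans hdb⟩)
      (hf'.mono (Icc_subset_Icc hac hdb))
  have hint {c d : ℝ} (hac : a ≤ c) (hcd : c ≤ d) (hdb : d ≤ b) :
      IntervalIntegrable (fun r => |f' r|) MeasureTheory.volume c d :=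
    (hf'.mono (Icc_subset_Icc hac hdb)).abs.intervalIntegrable_of_Icc hcd
  rw [← integral_add_adjacent_intervals (hint le_rfl (has.trans hst) htb)
      (hint (has.trans hst) htb le_rfl),
    ← integral_add_adjacent_intervals (hint le_rfl has (hst.trans htb))
      (hint has hst htb)]
  gcongr
  · exact piece le_rfl has (hst.trans htb)
  · exact piece has hst htb
  · exact piece (has.trans hst) htb le_rfl

/-- `[c - r, c + r]` is the range of `f`; its extreme values split `[a, b]` into three pieces. -/
theorem exists_abs_sub_le_and_four_mul_sub_le_integral_abs (hab : a ≤ b)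
    (hf : ∀ t ∈ Icc a b, HasDerivAt f (f' t) t) (hf' : ContinuousOn f' (Icc a b)) :
    ∃ c r : ℝ, (∀ t ∈ Icc a b, |f t - c| ≤ r) ∧ 4 * r - |f b - f a| ≤ ∫ t in a..b, |f' t| := by
  have hfc : ContinuousOn f (Icc a b) := fun t ht => (hf t ht).continuousAt.continuousWithinAt
  obtain ⟨s, hs, hmax⟩ := isCompact_Icc.exists_isMaxOn (nonempty_Icc.2 hab) hfc
  obtain ⟨t, ht, hmin⟩ := isCompact_Icc.exists_isMinOn (nonempty_Icc.2 hab) hfc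
  refine ⟨(f s + f t) / 2, (f s - f t) / 2, fun r hr => abs_le.2 ⟨?_, ?_⟩, ?_⟩
  · linarith [isMinOn_iff.1 hmin r hr]
  · linarith [isMaxOn_iff.1 hmax r hr]
  rcases le_total s t with hst | hts
  · have := abs_sub_add_abs_sub_add_abs_sub_le_integral_abs hs.1 hst ht.2 hf hf'
    linarith [le_abs_self (f s - f a), le_abs_self (f s - f t), neg_abs_le (f t - f s),
      le_abs_self (f b - f t), neg_abs_le (f b - f a)]
  · have := abs_sub_add_abs_sub_add_abs_sub_le_integral_abs ht.1 hts hs.2 hf hf'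
    linarith [neg_abs_le (f t - f a), le_abs_self (f s - f t), neg_abs_le (f b - f s),
      le_abs_self (f b - f a)]

end Variation

namespace IsHorizontal

variable {X Y Z u v : ℝ → ℝ}

theorem continuousOn_area_integrand (h : IsHorizontal X Y Z u v) (cx cy : ℝ) :
    ContinuousOn (fun t => (X t - cx) * v t - (Y t - cy) * u t) (Icc 0 1) :=
  ((h.continuousOn_fst.sub continuousOn_const).mul h.2.1).sub
    ((h.continuousOn_snd.sub continuousOn_const).mul h.1)

theorem integral_eq (h : IsHorizontal X Y Z u v) (cx cy : ℝ) :
    ∫ t in (0 : ℝ)..1, ((X t - cx) * v t - (Y t - cy) * u t) =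
      2 * (Z 1 - Z 0) - cx * (Y 1 - Y 0) + cy * (X 1 - X 0) := by
  have hF : ∀ t ∈ uIcc (0 : ℝ) 1, HasDerivAt (fun t => 2 * Z t - cx * Y t + cy * X t)
      ((X t - cx) * v t - (Y t - cy) * u t) t := by
    intro t ht
    obtain ⟨hX, hY, hZ⟩ := h.2.2 t (by rwa [uIcc_of_le zero_le_one] at ht)
    exact (((hZ.const_mul 2).sub (hY.const_mul cx)).add (hX.const_mul cy)).congr_deriv (by ring)
  rw [integral_eq_sub_of_hasDerivAt hF
    ((h.continuousOn_area_integrand cx cy).intervalIntegrable_of_Icc zero_le_one)]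
  ring

theorem abs_area_le (h : IsHorizontal X Y Z u v) {cx cy rx ry : ℝ}
    (hX : ∀ t ∈ Icc (0 : ℝ) 1, |X t - cx| ≤ rx) (hY : ∀ t ∈ Icc (0 : ℝ) 1, |Y t - cy| ≤ ry) :
    |2 * (Z 1 - Z 0) - cx * (Y 1 - Y 0) + cy * (X 1 - X 0)| ≤
      rx * (∫ t in (0 : ℝ)..1, |v t|) + ry * ∫ t in (0 : ℝ)..1, |u t| := by
  have hu := h.1.abs.intervalIntegrable_of_Icc (μ := MeasureTheory.volume) zero_le_one
  have hv := h.2.1.abs.intervalIntegrable_of_Icc (μ := MeasureTheory.volume) zero_le_one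
  rw [← h.integral_eq, ← integral_const_mul, ← integral_const_mul,
    ← integral_add (hv.const_mul rx) (hu.const_mul ry)]
  refine (abs_integral_le_integral_abs zero_le_one).trans (integral_mono_on zero_le_one
    ((h.continuousOn_area_integrand cx cy).abs.intervalIntegrable_of_Icc zero_le_one)
    ((hv.const_mul rx).add (hu.const_mul ry)) fun t ht => ?_)
  calc |(X t - cx) * v t - (Y t - cy) * u t|
      ≤ |X t - cx| * |v t| + |Y t - cy| * |u t| := by
        rw [← abs_mul, ← abs_mul]; exact abs_sub _ _
    _ ≤ rx * |v t| + ry * |u t| := by gcongr <;> [exact hX t ht; exact hY t ht]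

end IsHorizontal

theorem add_two_mul_div_le_of_box {x y z cx rx cy ry L₁ L₂ : ℝ} (hx : 0 < x)
    (hz : z ≤ x ^ 2 - x * |y| / 2) (hcx : |cx| ≤ rx) (hxcx : |x - cx| ≤ rx)
    (hcy : |cy| ≤ ry) (hycy : |y - cy| ≤ ry) (hL₁ : 4 * rx - x ≤ L₁) (hL₂ : 4 * ry - |y| ≤ L₂)
    (harea : 2 * z - cx * y + cy * x ≤ rx * L₂ + ry * L₁) :
    x + 2 * z / x ≤ L₁ + L₂ := by
  obtain ⟨hcx₁, hcx₂⟩ := abs_le.1 hcx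
  obtain ⟨hxcx₁, hxcx₂⟩ := abs_le.1 hxcx
  obtain ⟨hcy₁, hcy₂⟩ := abs_le.1 hcy
  obtain ⟨hycy₁, hycy₂⟩ := abs_le.1 hycy
  suffices x * x + 2 * z ≤ x * (L₁ + L₂) by
    rw [← le_sub_iff_add_le', div_le_iff₀ hx]; linarith
  -- A wide box makes `L₁ + L₂` large by itself; otherwise the area bound is needed.
  rcases le_or_gt (2 * ry) x with hry | hry
  · rcases le_or_gt rx x with hrx | hrx
    · have := mul_nonneg (sub_nonneg.2 hrx) (sub_nonneg.2 hry)
      rcases abs_cases y with ⟨hy, -⟩ | ⟨hy, -⟩ <;> rw [hy] at hz hL₂ <;> nlinarith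
    · nlinarith [abs_nonneg y]
  · nlinarith [abs_nonneg y]

theorem le_of_mem_horizontalLengths {x y z L : ℝ} (h : |z| ≤ max |x| |y| ^ 2 - |x * y| / 2)
    (hL : L ∈ horizontalLengths (x, y, z)) : max |x| |y| + 2 * |z| / max |x| |y| ≤ L := by
  wlog hyx : |y| ≤ |x| generalizing x y z
  · simpa [max_comm, mul_comm] using
      this (by simpa [max_comm, mul_comm] using h) (mem_horizontalLengths_swap hL) (by linarith)
  wlog hx : 0 ≤ x generalizing x z
  · simpa using this (by simpa using h) (mem_horizontalLengths_neg_fst hL) (by simpa using hyx)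
      (by linarith)
  wlog hz : 0 ≤ z generalizing y z
  · simpa using this (by simpa using h) (mem_horizontalLengths_neg_snd hL) (by simpa using hyx)
      (by linarith)
  rw [max_eq_left hyx, abs_of_nonneg hx, abs_of_nonneg hz] at *
  rcases hx.eq_or_lt with rfl | hx
  · simpa using nonneg_of_mem_horizontalLengths hL
  obtain ⟨X, Y, Z, u, v, hX0, hY0, hZ0, hX1, hY1, hZ1, hγ, rfl⟩ := hL
  obtain ⟨cx, rx, hXbox, hL₁⟩ := exists_abs_sub_le_and_four_mul_sub_le_integral_abs zero_le_one
    (fun t ht => (hγ.2.2 t ht).1) hγ.1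
  obtain ⟨cy, ry, hYbox, hL₂⟩ := exists_abs_sub_le_and_four_mul_sub_le_integral_abs zero_le_one
    (fun t ht => (hγ.2.2 t ht).2.1) hγ.2.1
  have harea := hγ.abs_area_le hXbox hYbox
  have h0 : (0 : ℝ) ∈ Icc (0 : ℝ) 1 := left_mem_Icc.2 zero_le_one
  have h1 : (1 : ℝ) ∈ Icc (0 : ℝ) 1 := right_mem_Icc.2 zero_le_one
  have hcx := hXbox 0 h0
  have hxcx := hXbox 1 h1
  have hcy := hYbox 0 h0
  have hycy := hYbox 1 h1
  simp only [hX0, hY0, hZ0, hX1, hY1, hZ1, sub_zero, zero_sub, abs_neg] at *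
  rw [integral_add (hγ.1.abs.intervalIntegrable_of_Icc zero_le_one)
    (hγ.2.1.abs.intervalIntegrable_of_Icc zero_le_one)]
  exact add_two_mul_div_le_of_box hx (by rwa [abs_mul, abs_of_pos hx] at h) hcx hxcx hcy hycy
    (by rwa [abs_of_pos hx] at hL₁) hL₂ (le_abs_self _ |>.trans harea)

/-- In the region `|xy|/2 ≤ |z| ≤ max{|x|,|y|}² − |xy|/2`, the subFinsler
distance from the identity in the Heisenberg group is
`max{|x|,|y|} + 2|z|/max{|x|,|y|}`. -/
theorem d3_eq_of_three_sided (x y z : ℝ)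
    (h1 : |x * y| / 2 ≤ |z|) (h2 : |z| ≤ max |x| |y| ^ 2 - |x * y| / 2) :
    d3 (x, y, z) = max |x| |y| + 2 * |z| / max |x| |y| := by
  obtain ⟨L, hL, hLle⟩ := exists_mem_horizontalLengths_le h1 h2
  rw [d3_eq_sInf_horizontalLengths]
  refine le_antisymm ((csInf_le ⟨0, fun _ => nonneg_of_mem_horizontalLengths⟩ hL).trans hLle) ?_
  exact le_csInf ⟨L, hL⟩ fun _ => le_of_mem_horizontalLengths h2
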